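/- arXiv:1211.0290 — 3 statements merged into one kernel-verified Lean document; each statement's English description precedes it below -/
import Mathlib

section
/- Let δ ≥ 0, let y(t) = Σ_{|k|≤f_lo} y_k e^{i2πkt} be a trigonometric polynomial of degree at most f_lo (so Q_lo y = y, and F_lo y = (y_k)), let x_est be a finite complex Borel measure on 𝕋 with polar decomposition x_est = e^{iφ}|x_est| (φ a real Borel function) satisfying ‖Q_lo x_est − y‖_{L2} ≤ δ, and let u ∈ ℂⁿ satisfy sup_{t∈𝕋} |(F_lo* u)(t)| ≤ 1. If strong duality holds at this pair, i.e. ‖x_est‖_TV = Re⟨F_lo y, u⟩ − δ ‖u‖_{ℓ2}, then (F_lo* u)(t) = e^{iφ(t)} for |x_est|-almost every t; in particular, if x_est = Σ_j a_j δ_{t_j} is atomic, then (F_lo* u)(t_j) = a_j/|a_j| for every j with a_j ≠ 0. -/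
noncomputable section

open MeasureTheory Complex Real Set

/-- The torus `𝕋 = ℝ/ℤ`. -/
abbrev Torus := AddCircle (1 : ℝ)

instance : Fact ((0:ℝ) < 1) := ⟨one_pos⟩

/-- The representative of a point of the torus in `(-1/2, 1/2]`. -/
def srep (t : Torus) : ℝ := (AddCircle.equivIoc (1:ℝ) (-(1/2)) t : ℝ)

/-- The complex exponential `e^{i 2π k t}` on the torus. -/
def char (k : ℤ) (t : Torus) : ℂ := Complex.exp (2 * π * Complex.I * k * srep t)

/-- The Dirichlet kernel with cut-off frequency `flo`. -/
def Klo (flo : ℕ) (t : Torus) : ℂ := ∑ k ∈ Finset.Icc (-(flo:ℤ)) (flo:ℤ), char k t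

/-- The Fejér kernel with cut-off frequency `fhi`. -/
def Khi (fhi : ℕ) (t : Torus) : ℂ :=
  ((fhi : ℂ) + 1)⁻¹ *
    ∑ k ∈ Finset.Icc (-(fhi:ℤ)) (fhi:ℤ), (((fhi : ℝ) + 1 - |(k : ℝ)|) : ℂ) * char k t

/-- A finite complex Borel measure, given through its polar decomposition
`μ = phase ⬝ pos` with `pos = |μ|` a finite positive measure and `phase` a
unit-modulus measurable density. -/
structure PolarMeasure (α : Type) [MeasurableSpace α] where
  pos : Measure α
  finite : IsFiniteMeasure pos
  phase : α → ℂ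
  meas : Measurable phase
  unit : ∀ t, ‖phase t‖ = 1

namespace PolarMeasure

variable {α : Type} [MeasurableSpace α]

/-- The integral `∫ g dμ` of a complex function against a complex measure. -/
def integ (μ : PolarMeasure α) (g : α → ℂ) : ℂ := ∫ t, g t * μ.phase t ∂μ.pos

/-- The total-variation norm `‖μ‖_TV`. -/
def tv (μ : PolarMeasure α) : ℝ := (μ.pos Set.univ).toReal

/-- The total-variation norm `‖P_S μ‖_TV` of the restriction of `μ` to `S`. -/
def tvOn (μ : PolarMeasure α) (S : Set α) : ℝ := (μ.pos S).toReal

end PolarMeasure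

/-- The convolution `(K * μ)(t) = ∫ K(t-τ) μ(dτ)`. -/
def convM (K : Torus → ℂ) (μ : PolarMeasure Torus) (t : Torus) : ℂ :=
  μ.integ fun τ => K (t - τ)

/-- `(Q_lo μ)(t)`, the low-pass filtered version of the measure `μ`. -/
def QloM (flo : ℕ) (μ : PolarMeasure Torus) : Torus → ℂ := convM (Klo flo) μ

/-- `‖g‖_{L1}` on the torus (with respect to normalized Haar measure). -/
def L1norm (g : Torus → ℂ) : ℝ := ∫ t, ‖g t‖

/-- `‖g‖_{L2}` on the torus. -/
def L2norm (g : Torus → ℂ) : ℝ := Real.sqrt (∫ t, ‖g t‖ ^ 2)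

/-- `S_near^λ(j)`, the points at distance at most `0.16 λ` from `t_j`. -/
def Snear (lam : ℝ) (tj : Torus) : Set Torus := {t | dist t tj ≤ 0.16 * lam}

/-- `S_far^λ`, the points at distance more than `0.16 λ` from every point of `T`. -/
def Sfar (lam : ℝ) (T : Set Torus) : Set Torus := {t | ∀ tj ∈ T, 0.16 * lam < dist t tj}

/-- `I_{S_near^λ(j)}(μ) = λ_lo⁻² ∫_{S_near^λ(j)} (t-t_j)² |μ|(dt)`. -/
def InearJ (flo : ℕ) (lam : ℝ) (μ : PolarMeasure Torus) (tj : Torus) : ℝ :=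
  (flo : ℝ) ^ 2 * ∫ t in Snear lam tj, dist t tj ^ 2 ∂μ.pos

/-- `I_{S_near^λ}(μ) = Σ_j I_{S_near^λ(j)}(μ)`. -/
def Inear (flo : ℕ) (lam : ℝ) (μ : PolarMeasure Torus) {m : ℕ} (tp : Fin m → Torus) : ℝ :=
  ∑ j, InearJ flo lam μ (tp j)

/-- The measure `Σ_j a_j δ_{t_j}`: `x` equals this measure iff `IsSpikeTrain x a tp`. -/
def IsSpikeTrain {m : ℕ} (x : PolarMeasure Torus) (a : Fin m → ℂ) (tp : Fin m → Torus) : Prop :=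
  (x.pos = ∑ j, ENNReal.ofReal (‖a j‖) • Measure.dirac (tp j)) ∧
    ∀ j, x.phase (tp j) = a j / (‖a j‖ : ℂ)

/-- `h` is the difference `x - x'` of the two complex measures `x, x'`. -/
def IsDiff {α : Type} [MeasurableSpace α] (h x x' : PolarMeasure α) : Prop :=
  ∀ S : Set α, MeasurableSet S →
    h.integ (S.indicator fun _ => (1:ℂ)) =
      x.integ (S.indicator fun _ => (1:ℂ)) - x'.integ (S.indicator fun _ => (1:ℂ))

/-- The minimum-separation condition `Δ(T) ≥ d` for `T = {tp j}`. -/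
def Separated {m : ℕ} (tp : Fin m → Torus) (d : ℝ) : Prop :=
  ∀ j k : Fin m, j ≠ k → d ≤ dist (tp j) (tp k)

/-!
For a continuous `p` with `‖p‖ ≤ 1` and a measure `x = φ ⬝ |x|`, the pointwise bound
`‖p - φ‖² ≤ 2 (1 - Re (p φ̄))` shows that `Re ∫ p φ̄ d|x| ≤ ‖x‖_TV`, with equality only if `p = φ`
`|x|`-almost everywhere. For `p = F_lo* u` the integral is `⟨F_lo x, u⟩`, and Parseval together with
Cauchy–Schwarz give `Re ⟨F_lo y - F_lo x, u⟩ ≤ ‖Q_lo x - y‖_{L2} ‖u‖ ≤ δ ‖u‖`; hence strong duality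
forces `‖x‖_TV ≤ Re ⟨F_lo x, u⟩`, i.e. the equality case.
-/

open AddCircle ComplexConjugate

lemma Complex.eq_of_norm_le_one_of_one_le_re_mul_conj {z w : ℂ} (hz : ‖z‖ ≤ 1) (hw : ‖w‖ = 1)
    (h : 1 ≤ (z * conj w).re) : z = w := by
  have hsub : Complex.normSq (z - w) ≤ 0 := by
    rw [Complex.normSq_sub, ← Complex.sq_norm, ← Complex.sq_norm, hw]
    nlinarith [norm_nonneg z]
  exact sub_eq_zero.mp (Complex.normSq_eq_zero.mp (le_antisymm hsub (Complex.normSq_nonneg _)))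

lemma re_sum_conj_mul_le_sqrt_mul_sqrt {ι : Type*} (s : Finset ι) (a b : ι → ℂ) :
    (∑ k ∈ s, conj (a k) * b k).re ≤ √(∑ k ∈ s, ‖a k‖ ^ 2) * √(∑ k ∈ s, ‖b k‖ ^ 2) :=
  calc (∑ k ∈ s, conj (a k) * b k).re
      ≤ ‖∑ k ∈ s, conj (a k) * b k‖ := Complex.re_le_norm _
    _ ≤ ∑ k ∈ s, ‖a k‖ * ‖b k‖ := by
      simpa only [norm_mul, Complex.norm_conj] using norm_sum_le s fun k => conj (a k) * b k
    _ ≤ √(∑ k ∈ s, ‖a k‖ ^ 2) * √(∑ k ∈ s, ‖b k‖ ^ 2) := Real.sum_mul_le_sqrt_mul_sqrt s _ _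

lemma fourier_sub_apply {T : ℝ} (k : ℤ) (t τ : AddCircle T) :
    fourier k (t - τ) = fourier k t * fourier (-k) τ := by
  simp [fourier_apply, sub_eq_add_neg, toCircle_add, neg_smul]

lemma integral_norm_sq_sum_fourier {T : ℝ} [Fact (0 < T)] (s : Finset ℤ) (v : ℤ → ℂ) :
    ∫ t : AddCircle T, ‖∑ k ∈ s, v k * fourier k t‖ ^ 2 ∂haarAddCircle = ∑ k ∈ s, ‖v k‖ ^ 2 := by
  set f : C(AddCircle T, ℂ) := ∑ k ∈ s, v k • fourier k
  have hinner : ∫ t, f t * conj (f t) ∂haarAddCircle = ∑ k ∈ s, conj (v k) * v k := by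
    rw [← ContinuousMap.inner_toLp, ← (orthonormal_fourier (T := T)).inner_sum]
    simp only [f, map_sum, map_smul]
  have hf : ∀ t, f t = ∑ k ∈ s, v k * fourier k t := fun t => by simp [f]
  simp only [Complex.mul_conj', Complex.conj_mul', hf] at hinner
  exact_mod_cast hinner

lemma srep_coe (t : Torus) : (srep t : Torus) = t :=
  (AddCircle.equivIoc (1:ℝ) (-(1/2))).symm_apply_apply t

lemma char_eq_fourier (k : ℤ) (t : Torus) : char k t = fourier k t := by
  conv_rhs => rw [← srep_coe t]
  rw [fourier_coe_apply]
  simp [char]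

namespace PolarMeasure

variable {α : Type} [MeasurableSpace α] (μ : PolarMeasure α)

instance : IsFiniteMeasure μ.pos := μ.finite

variable {μ} {p : α → ℂ}

lemma integrable_mul_conj_phase (hp : AEStronglyMeasurable p μ.pos) (hp1 : ∀ t, ‖p t‖ ≤ 1) :
    Integrable (fun t => p t * conj (μ.phase t)) μ.pos :=
  Integrable.of_bound
    (hp.mul (Complex.continuous_conj.measurable.comp μ.meas).aestronglyMeasurable) 1 <|
      ae_of_all _ fun t => by simpa only [norm_mul, Complex.norm_conj, μ.unit, mul_one] using hp1 t

lemma re_mul_conj_phase_le_one (hp1 : ∀ t, ‖p t‖ ≤ 1) (t : α) :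
    (p t * conj (μ.phase t)).re ≤ 1 :=
  (Complex.re_le_norm _).trans <| by
    simpa only [norm_mul, Complex.norm_conj, μ.unit, mul_one] using hp1 t

lemma ae_eq_phase_of_tv_le_re_integral (hp : AEStronglyMeasurable p μ.pos)
    (hp1 : ∀ t, ‖p t‖ ≤ 1) (h : μ.tv ≤ (∫ t, p t * conj (μ.phase t) ∂μ.pos).re) :
    p =ᵐ[μ.pos] μ.phase := by
  have hint := integrable_mul_conj_phase hp hp1
  have hre : Integrable (fun t => (p t * conj (μ.phase t)).re) μ.pos := hint.re
  have hre_int : ∫ t, (p t * conj (μ.phase t)).re ∂μ.pos =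
      (∫ t, p t * conj (μ.phase t) ∂μ.pos).re :=
    integral_re hint
  have hgap_nonneg : 0 ≤ fun t => 1 - (p t * conj (μ.phase t)).re :=
    fun t => sub_nonneg.mpr (re_mul_conj_phase_le_one hp1 t)
  have hgap : ∫ t, (1 - (p t * conj (μ.phase t)).re) ∂μ.pos = 0 := by
    refine le_antisymm ?_ (integral_nonneg hgap_nonneg)
    rw [integral_sub (integrable_const 1) hre, hre_int]
    simpa [PolarMeasure.tv, measureReal_def] using h
  have hzero :=
    (integral_eq_zero_iff_of_nonneg hgap_nonneg ((integrable_const 1).sub hre)).mp hgap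
  filter_upwards [hzero] with t ht
  exact Complex.eq_of_norm_le_one_of_one_le_re_mul_conj (hp1 t) (μ.unit t)
    (by simp only [Pi.zero_apply, sub_eq_zero] at ht; exact ht.le)

section AddCircle

variable {T : ℝ}

def fourierCoeff (μ : PolarMeasure (AddCircle T)) (k : ℤ) : ℂ := μ.integ (fourier (-k))

variable (μ : PolarMeasure (AddCircle T))

lemma integrable_fourier_mul_phase (k : ℤ) :
    Integrable (fun t => fourier k t * μ.phase t) μ.pos :=
  Integrable.of_bound ((map_continuous _).aestronglyMeasurable.mul μ.meas.aestronglyMeasurable) 1 <|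
    ae_of_all _ fun t => by simp [μ.unit, Circle.norm_coe]

lemma sum_conj_fourierCoeff_mul (s : Finset ℤ) (u : ℤ → ℂ) :
    ∑ k ∈ s, conj (μ.fourierCoeff k) * u k =
      ∫ t, (∑ k ∈ s, u k * fourier k t) * conj (μ.phase t) ∂μ.pos := by
  have hint (k : ℤ) := integrable_mul_conj_phase (μ := μ)
    (map_continuous (fourier k)).aestronglyMeasurable fun t => by simp [Circle.norm_coe]
  simp only [Finset.sum_mul, mul_assoc]
  rw [integral_finsetSum _ fun k _ => (hint k).const_mul (u k)]
  refine Finset.sum_congr rfl fun k _ => ?_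
  rw [integral_const_mul, mul_comm, fourierCoeff, integ, ← integral_conj]
  simp

end AddCircle

end PolarMeasure

lemma QloM_eq_sum_fourierCoeff (flo : ℕ) (μ : PolarMeasure Torus) (t : Torus) :
    QloM flo μ t = ∑ k ∈ Finset.Icc (-(flo:ℤ)) flo, μ.fourierCoeff k * fourier k t := by
  simp only [QloM, convM, PolarMeasure.integ, Klo, char_eq_fourier, fourier_sub_apply,
    Finset.sum_mul, mul_assoc]
  rw [integral_finsetSum _ fun k _ => (μ.integrable_fourier_mul_phase (-k)).const_mul _]
  refine Finset.sum_congr rfl fun k _ => ?_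
  rw [integral_const_mul, mul_comm, PolarMeasure.fourierCoeff, PolarMeasure.integ]

lemma IsSpikeTrain.of_ae {m : ℕ} {x : PolarMeasure Torus} {a : Fin m → ℂ} {tp : Fin m → Torus}
    (hx : IsSpikeTrain x a tp) {P : Torus → Prop} (hP : ∀ᵐ t ∂x.pos, P t) {j : Fin m}
    (hj : a j ≠ 0) : P (tp j) := by
  by_contra hPj
  have hnull : x.pos {tp j} = 0 :=
    measure_mono_null (Set.singleton_subset_iff.mpr hPj) (ae_iff.mp hP)
  have hle : ENNReal.ofReal ‖a j‖ ≤ x.pos {tp j} := by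
    rw [hx.1, Measure.finsetSum_apply]
    refine le_trans ?_ (Finset.single_le_sum (fun _ _ => bot_le) (Finset.mem_univ j))
    simp
  simp [hnull, hj] at hle

theorem primal_dual_sign_interpolation_general
    (flo : ℕ) (δ : ℝ)
    (yc : ℤ → ℂ)
    (xest : PolarMeasure Torus)
    (hfeas : L2norm (fun t => QloM flo xest t -
      ∑ k ∈ Finset.Icc (-(flo:ℤ)) (flo:ℤ), yc k * char k t) ≤ δ)
    (u : ℤ → ℂ)
    (hbound : ∀ t : Torus,
      ‖∑ k ∈ Finset.Icc (-(flo:ℤ)) (flo:ℤ), u k * char k t‖ ≤ 1)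
    (hstrong : xest.tv =
      (∑ k ∈ Finset.Icc (-(flo:ℤ)) (flo:ℤ), (starRingEnd ℂ) (yc k) * u k).re -
        δ * Real.sqrt (∑ k ∈ Finset.Icc (-(flo:ℤ)) (flo:ℤ), ‖u k‖ ^ 2)) :
    (∀ᵐ t ∂xest.pos,
        (∑ k ∈ Finset.Icc (-(flo:ℤ)) (flo:ℤ), u k * char k t) = xest.phase t) ∧
      ∀ (m : ℕ) (a : Fin m → ℂ) (tp : Fin m → Torus), IsSpikeTrain xest a tp →
        ∀ j, a j ≠ 0 →
          (∑ k ∈ Finset.Icc (-(flo:ℤ)) (flo:ℤ), u k * char k (tp j)) =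
            a j / (‖a j‖ : ℂ) := by
  set s := Finset.Icc (-(flo:ℤ)) flo
  set c := xest.fourierCoeff
  simp only [char_eq_fourier] at hfeas hbound ⊢
  have hresidual : √(∑ k ∈ s, ‖yc k - c k‖ ^ 2) ≤ δ := by
    have hvol : (volume : Measure Torus) = haarAddCircle := by
      simp [volume_eq_smul_haarAddCircle]
    have hdiff (t : Torus) : QloM flo xest t - ∑ k ∈ s, yc k * fourier k t =
        ∑ k ∈ s, (c k - yc k) * fourier k t := by
      simp only [QloM_eq_sum_fourierCoeff, sub_mul, Finset.sum_sub_distrib]; rfl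
    simp only [L2norm, hdiff, hvol, integral_norm_sq_sum_fourier] at hfeas
    simpa only [norm_sub_rev] using hfeas
  have hdual : xest.tv ≤ (∑ k ∈ s, conj (c k) * u k).re := by
    have hsplit : ∑ k ∈ s, conj (yc k) * u k =
        ∑ k ∈ s, conj (c k) * u k + ∑ k ∈ s, conj (yc k - c k) * u k := by
      rw [← Finset.sum_add_distrib]; simp [sub_mul]
    have hcs := re_sum_conj_mul_le_sqrt_mul_sqrt s (yc - c) u
    have hδ := mul_le_mul_of_nonneg_right hresidual (Real.sqrt_nonneg (∑ k ∈ s, ‖u k‖ ^ 2))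
    simp only [Pi.sub_apply] at hcs
    rw [hstrong, hsplit, Complex.add_re]
    linarith
  have hae : (fun t => ∑ k ∈ s, u k * fourier k t) =ᵐ[xest.pos] xest.phase := by
    refine xest.ae_eq_phase_of_tv_le_re_integral (Continuous.aestronglyMeasurable (by fun_prop))
      hbound ?_
    rwa [← xest.sum_conj_fourierCoeff_mul]
  refine ⟨hae, fun m a tp hx j hj => ?_⟩
  rw [← hx.2 j]
  exact hx.of_ae hae hj

/-- Lemma 3.1: at a primal-dual optimal pair the dual polynomial
interpolates the sign of the primal solution. -/
theorem primal_dual_sign_interpolation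
    (flo : ℕ) (hflo : 0 < flo) (δ : ℝ) (hδ : 0 ≤ δ)
    (yc : ℤ → ℂ)
    (xest : PolarMeasure Torus)
    (hfeas : L2norm (fun t => QloM flo xest t -
      ∑ k ∈ Finset.Icc (-(flo:ℤ)) (flo:ℤ), yc k * char k t) ≤ δ)
    (u : ℤ → ℂ)
    (hbound : ∀ t : Torus,
      ‖∑ k ∈ Finset.Icc (-(flo:ℤ)) (flo:ℤ), u k * char k t‖ ≤ 1)
    (hstrong : xest.tv =
      (∑ k ∈ Finset.Icc (-(flo:ℤ)) (flo:ℤ), (starRingEnd ℂ) (yc k) * u k).re -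
        δ * Real.sqrt (∑ k ∈ Finset.Icc (-(flo:ℤ)) (flo:ℤ), ‖u k‖ ^ 2)) :
    (∀ᵐ t ∂xest.pos,
        (∑ k ∈ Finset.Icc (-(flo:ℤ)) (flo:ℤ), u k * char k t) = xest.phase t) ∧
      ∀ (m : ℕ) (a : Fin m → ℂ) (tp : Fin m → Torus), IsSpikeTrain xest a tp →
        ∀ j, a j ≠ 0 →
          (∑ k ∈ Finset.Icc (-(flo:ℤ)) (flo:ℤ), u k * char k (tp j)) =
            a j / (‖a j‖ : ℂ) :=
  primal_dual_sign_interpolation_general flo δ yc xest hfeas u hbound hstrong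

end
end

section
/- For all positive constants C2, C3 there exists a constant C4 > 0 depending only on C2 and C3 such that the following holds. Let λ_hi ∈ (0,1] and let K : 𝕋 → ℝ be an even, twice continuously differentiable kernel satisfying sup_t |K''(t)| ≤ C2 λ_hi^{−3}, and suppose there exists a nonnegative nonincreasing function f : [0,1/2] → ℝ with |K''(t+λ_hi)| ≤ f(t) for all 0 ≤ t ≤ 1/2 and ∫₀^{1/2} f(t) dt ≤ C3 λ_hi^{−2}. Then ∫_𝕋 sup_{u : |u−t| ≤ 0.16 λ_hi} |K''(u)| dt ≤ C4 λ_hi^{−2}. -/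
/-!
Write `g = K''` and `S t` for the supremum of `|g|` on the window `|u - t| ≤ 0.16 λ`.
Periodicity and evenness make `g`, hence `S`, symmetric under `t ↦ 1 - t`, so it suffices to
bound `∫₀^{1/2} S`. On `[0, 1.16 λ]` use `S ≤ C₂ λ⁻³`, giving `O(λ⁻²)`. For `t ≥ 1.16 λ` every
point `u` of the window satisfies `u - λ ≥ t - 1.16 λ ≥ 0`, so monotonicity of the majorant gives
`S t ≤ f (t - 1.16 λ)`, whose integral is at most `∫₀^{1/2} f ≤ C₃ λ⁻²`.
-/

noncomputable section

open MeasureTheory Set intervalIntegral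

lemma deriv_deriv_const_sub_eq {K : ℝ → ℝ} {a : ℝ} (hK : ∀ x, K (a - x) = K x) (x : ℝ) :
    deriv (deriv K) (a - x) = deriv (deriv K) x := by
  have hK' : ∀ y, deriv K (a - y) = -deriv K y := by
    intro y
    have h := deriv_comp_const_sub K a y
    rw [funext hK] at h
    linarith
  have h := deriv_comp_const_sub (deriv K) a x
  rw [funext hK', deriv.fun_neg] at h
  linarith

lemma integral_eq_two_mul_integral_half_of_const_sub_eq {S : ℝ → ℝ} {a : ℝ}
    (hS : ∀ t, S (a - t) = S t) (hint : IntervalIntegrable S volume 0 a) :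
    ∫ t in 0..a, S t = 2 * ∫ t in 0..a / 2, S t := by
  have hmid : a / 2 ∈ uIcc 0 a := by
    rw [mem_uIcc]
    rcases le_total 0 a with h | h
    · exact Or.inl ⟨by linarith, by linarith⟩
    · exact Or.inr ⟨by linarith, by linarith⟩
  have hreflect : ∫ t in a / 2..a, S t = ∫ t in 0..a / 2, S t := by
    calc ∫ t in a / 2..a, S t = ∫ t in a / 2..a, S (a - t) := by simp only [hS]
      _ = ∫ t in 0..a / 2, S t := by rw [integral_comp_sub_left]; ring_nf
  rw [← integral_add_adjacent_intervals
    (hint.mono_set (uIcc_subset_uIcc left_mem_uIcc hmid))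
    (hint.mono_set (uIcc_subset_uIcc hmid right_mem_uIcc)), hreflect]
  ring

lemma integral_le_mul_add_integral_of_le_comp_sub {S f : ℝ → ℝ} {a b M : ℝ}
    (ha : 0 ≤ a) (hab : a ≤ b) (hS : IntervalIntegrable S volume 0 b)
    (hSM : ∀ x ∈ Icc 0 a, S x ≤ M) (hSf : ∀ x ∈ Icc a b, S x ≤ f (x - a))
    (hf0 : ∀ x ∈ Icc 0 b, 0 ≤ f x) (hf : IntervalIntegrable f volume 0 b) :
    ∫ x in 0..b, S x ≤ a * M + ∫ x in 0..b, f x := by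
  have hb : 0 ≤ b := ha.trans hab
  have ha_mem : a ∈ uIcc 0 b := by rw [uIcc_of_le hb]; exact ⟨ha, hab⟩
  have hba_mem : b - a ∈ uIcc 0 b := by rw [uIcc_of_le hb]; constructor <;> linarith
  have hSa := hS.mono_set (uIcc_subset_uIcc left_mem_uIcc ha_mem)
  have hSb := hS.mono_set (uIcc_subset_uIcc ha_mem right_mem_uIcc)
  have hfa : IntervalIntegrable (fun x ↦ f (x - a)) volume a b := by
    simpa using (hf.mono_set (uIcc_subset_uIcc left_mem_uIcc hba_mem)).comp_sub_right a
  calc ∫ x in 0..b, S x = (∫ x in 0..a, S x) + ∫ x in a..b, S x :=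
        (integral_add_adjacent_intervals hSa hSb).symm
    _ ≤ (∫ _ in 0..a, M) + ∫ x in a..b, f (x - a) :=
        add_le_add (integral_mono_on ha hSa intervalIntegrable_const hSM)
          (integral_mono_on hab hSb hfa hSf)
    _ = a * M + ∫ x in 0..b - a, f x := by
        rw [intervalIntegral.integral_const, integral_comp_sub_right, smul_eq_mul, sub_zero,
          sub_self]
    _ ≤ a * M + ∫ x in 0..b, f x := by
        gcongr
        refine integral_mono_interval le_rfl (by linarith) (by linarith) ?_ hf
        filter_upwards [ae_restrict_mem measurableSet_Ioc] with x hx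
        exact hf0 x (Ioc_subset_Icc_self hx)

def localSupAbs (g : ℝ → ℝ) (r t : ℝ) : ℝ :=
  sSup {y : ℝ | ∃ u : ℝ, |u - t| ≤ r ∧ y = |g u|}

section localSupAbs

variable {g : ℝ → ℝ} {r : ℝ}

lemma localSupAbs_le {t M : ℝ} (hr : 0 ≤ r) (h : ∀ u, |u - t| ≤ r → |g u| ≤ M) :
    localSupAbs g r t ≤ M := by
  refine csSup_le ⟨|g t|, t, by simpa using hr, rfl⟩ ?_
  rintro _ ⟨u, hu, rfl⟩
  exact h u hu

lemma localSupAbs_const_sub {a : ℝ} (hg : ∀ u, g (a - u) = g u) (t : ℝ) :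
    localSupAbs g r (a - t) = localSupAbs g r t := by
  have hdist : ∀ u s, |(a - u) - s| = |u - (a - s)| := fun u s ↦ by
    rw [← abs_neg]; ring_nf
  unfold localSupAbs
  congr 1
  ext y
  constructor
  · rintro ⟨u, hu, rfl⟩
    exact ⟨a - u, by rwa [hdist], by rw [hg]⟩
  · rintro ⟨u, hu, rfl⟩
    exact ⟨a - u, by rwa [hdist, sub_sub_cancel], by rw [hg]⟩

lemma localSupAbs_le_of_antitoneOn {f : ℝ → ℝ} {a b c x : ℝ} (hr : 0 ≤ r)
    (hf : AntitoneOn f (Icc a b)) (hgf : ∀ s ∈ Icc a b, |g (s + c)| ≤ f s)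
    (hxa : a ≤ x - (r + c)) (hxb : x + r - c ≤ b) :
    localSupAbs g r x ≤ f (x - (r + c)) := by
  refine localSupAbs_le hr fun u hu ↦ ?_
  obtain ⟨hu₁, hu₂⟩ := abs_le.mp hu
  have hs : u - c ∈ Icc a b := ⟨by linarith, by linarith⟩
  calc |g u| = |g (u - c + c)| := by rw [sub_add_cancel]
    _ ≤ f (u - c) := hgf _ hs
    _ ≤ f (x - (r + c)) := hf ⟨hxa, by linarith⟩ hs (by linarith)

lemma integral_localSupAbs_le {f : ℝ → ℝ} {b c M : ℝ} (hb : 0 ≤ b) (hr : 0 ≤ r) (hrc : r ≤ c)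
    (hM : ∀ u, |g u| ≤ M) (hf0 : ∀ t ∈ Icc 0 b, 0 ≤ f t) (hf : AntitoneOn f (Icc 0 b))
    (hgf : ∀ t ∈ Icc 0 b, |g (t + c)| ≤ f t)
    (hS : IntervalIntegrable (localSupAbs g r) volume 0 b) :
    ∫ t in 0..b, localSupAbs g r t ≤ (r + c) * M + ∫ t in 0..b, f t := by
  have hSM : ∀ x, localSupAbs g r x ≤ M := fun x ↦ localSupAbs_le hr fun u _ ↦ hM u
  have hfi : IntervalIntegrable f volume 0 b :=
    AntitoneOn.intervalIntegrable (by rwa [uIcc_of_le hb])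
  by_cases hsmall : r + c ≤ b
  · refine integral_le_mul_add_integral_of_le_comp_sub (by linarith) hsmall hS
      (fun x _ ↦ hSM x) (fun x hx ↦ ?_) hf0 hfi
    exact localSupAbs_le_of_antitoneOn hr hf hgf (by linarith [hx.1]) (by linarith [hx.2])
  · have hM0 : 0 ≤ M := (abs_nonneg _).trans (hM 0)
    have hf_int : 0 ≤ ∫ t in 0..b, f t := integral_nonneg hb hf0
    calc ∫ t in 0..b, localSupAbs g r t ≤ ∫ _ in 0..b, M :=
          integral_mono_on hb hS intervalIntegrable_const fun x _ ↦ hSM x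
      _ ≤ (r + c) * M + ∫ t in 0..b, f t := by
          rw [intervalIntegral.integral_const, smul_eq_mul, sub_zero]
          nlinarith

end localSupAbs

/-- integral bound (2.7) on the local supremum of the second
derivative of an admissible kernel. -/
theorem sup_second_derivative_integral_bound :
    ∀ C2 C3 : ℝ, 0 < C2 → 0 < C3 →
      ∃ C4 : ℝ, 0 < C4 ∧
        ∀ lhi : ℝ, 0 < lhi → lhi ≤ 1 →
          ∀ K : ℝ → ℝ, Function.Periodic K 1 → (∀ t, K (-t) = K t) → ContDiff ℝ 2 K →
            (∀ t : ℝ, |deriv (deriv K) t| ≤ C2 / lhi ^ 3) →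
            (∃ f : ℝ → ℝ,
              (∀ t ∈ Set.Icc (0:ℝ) (1/2), 0 ≤ f t) ∧
              AntitoneOn f (Set.Icc (0:ℝ) (1/2)) ∧
              (∀ t ∈ Set.Icc (0:ℝ) (1/2), |deriv (deriv K) (t + lhi)| ≤ f t) ∧
              (∫ t in (0:ℝ)..(1/2), f t) ≤ C3 / lhi ^ 2) →
            (∫ t in (0:ℝ)..1,
                sSup {y : ℝ | ∃ u : ℝ, |u - t| ≤ 0.16 * lhi ∧ y = |deriv (deriv K) u|}) ≤
              C4 / lhi ^ 2 := by
  intro C2 C3 hC2 hC3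
  refine ⟨3 * C2 + 2 * C3, by positivity, ?_⟩
  rintro lhi hl - K hper heven - hbd ⟨f, hf0, hanti, hfK, hfint⟩
  set S := localSupAbs (deriv (deriv K)) (0.16 * lhi)
  change ∫ t in (0:ℝ)..1, S t ≤ _
  -- A non-integrable `S` has integral `0` by convention.
  by_cases hint : IntervalIntegrable S volume 0 1
  swap
  · rw [integral_undef hint]; positivity
  have hS : IntervalIntegrable S volume 0 (1 / 2) :=
    hint.mono_set (uIcc_subset_uIcc left_mem_uIcc (by rw [uIcc_of_le zero_le_one]; norm_num))
  have hhalf : ∫ t in (0:ℝ)..1 / 2, S t ≤ (0.16 * lhi + lhi) * (C2 / lhi ^ 3) + C3 / lhi ^ 2 :=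
    (integral_localSupAbs_le (by norm_num) (by positivity) (by linarith) hbd hf0 hanti hfK
      hS).trans (by gcongr)
  have hsymm : ∀ t, S (1 - t) = S t :=
    localSupAbs_const_sub (deriv_deriv_const_sub_eq fun x ↦ by rw [hper.sub_eq', heven])
  rw [integral_eq_two_mul_integral_half_of_const_sub_eq hsymm hint]
  calc 2 * ∫ t in (0:ℝ)..1 / 2, S t
      ≤ 2 * ((0.16 * lhi + lhi) * (C2 / lhi ^ 3) + C3 / lhi ^ 2) := by gcongr
    _ = (2.32 * C2 + 2 * C3) / lhi ^ 2 := by field_simp; ring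
    _ ≤ (3 * C2 + 2 * C3) / lhi ^ 2 := by gcongr; linarith

end
end

section
/- There exist positive constants C_κ, C_α, C_β such that the following holds for every integer f ≥ 1 and every positive integer m. Set κ := π² f (f+4)/3 and let D₀, D₁, D₂ be complex m×m matrices satisfying ‖I − D₀‖_∞ ≤ 0.007, ‖D₁‖_∞ ≤ 0.08 f, and ‖κ I − D₂‖_∞ ≤ 1.06 f². Then: (i) D₀ is invertible with ‖D₀^{−1}‖_∞ ≤ 1/(1 − 0.007); (ii) the Schur complement S := D₂ − D₁ D₀^{−1} D₁ is invertible with ‖S^{−1}‖_∞ ≤ C_κ f^{−2}; and (iii) for every v ∈ ℂ^m with ‖v‖_∞ ≤ 1, the vectors β := S^{−1} v and α := −D₀^{−1} D₁ β solve the system D₀ α + D₁ β = 0, D₁ α + D₂ β = v, and satisfy ‖α‖_∞ ≤ C_α f^{−1} and ‖β‖_∞ ≤ C_β f^{−2}. -/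
/-!
By the Neumann series, `‖1 - D₀‖ ≤ 0.007` gives `‖D₀⁻¹‖ ≤ 1 / 0.993 < 1.008`. The Schur complement
`S = D₂ - D₁ D₀⁻¹ D₁` is then close to the scalar `κ`: `‖κ - S‖ ≤ 1.06 f² + 0.0065 f² < 1.07 f²`,
while `κ ≥ π² f² / 3 > 3 f²`. So `‖1 - S / κ‖ ≤ 1 / 2`, and a second Neumann series gives
`‖S⁻¹‖ ≤ 2 / κ < f⁻²`. The bounds on `β = S⁻¹ v` and `α = -D₀⁻¹ D₁ β` follow by
submultiplicativity, and the two equations are block Gaussian elimination.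
-/

noncomputable section

open Complex Real Matrix

def rowSumNorm {m : ℕ} (M : Matrix (Fin m) (Fin m) ℂ) : ℝ :=
  ⨆ i, ∑ j, ‖M i j‖

def vecSupNorm {m : ℕ} (v : Fin m → ℂ) : ℝ := ⨆ i, ‖v i‖

open scoped Ring

section NeumannSeries

variable {A : Type*} [NormedRing A] [HasSummableGeomSeries A]

theorem isUnit_of_norm_one_sub_lt_one {a : A} (h : ‖1 - a‖ < 1) : IsUnit a := by
  simpa using isUnit_one_sub_of_norm_lt_one h

theorem norm_ringInverse_le_of_norm_one_sub_le [NormOneClass A] {a : A} {r : ℝ}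
    (h : ‖1 - a‖ ≤ r) (hr : r < 1) : ‖a⁻¹ʳ‖ ≤ (1 - r)⁻¹ := by
  have h₁ : ‖1 - a‖ < 1 := h.trans_lt hr
  calc ‖a⁻¹ʳ‖ = ‖∑' n : ℕ, (1 - a) ^ n‖ := by rw [geom_series_eq_inverse _ h₁, sub_sub_cancel]
    _ ≤ ‖(1 : A)‖ - 1 + (1 - ‖1 - a‖)⁻¹ := tsum_geometric_le_of_norm_lt_one _ h₁
    _ ≤ (1 - r)⁻¹ := by rw [norm_one, sub_self, zero_add]; gcongr

end NeumannSeries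

theorem Ring.inverse_smul {𝕜 R : Type*} [Field 𝕜] [Semiring R] [Algebra 𝕜 R] {c : 𝕜} (hc : c ≠ 0)
    (a : R) : (c • a)⁻¹ʳ = c⁻¹ • a⁻¹ʳ := by
  by_cases ha : IsUnit a
  · obtain ⟨u, rfl⟩ := ha
    let v : Rˣ := ⟨c • u, c⁻¹ • ↑u⁻¹, by simp [hc], by simp [hc]⟩
    rw [show c • (u : R) = v from rfl, Ring.inverse_unit, Ring.inverse_unit]
    rfl
  · have hca : ¬IsUnit (c • a) := by
      rwa [show c • a = Units.mk0 c hc • a from rfl, isUnit_smul_iff]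
    rw [Ring.inverse_non_unit _ ha, Ring.inverse_non_unit _ hca, smul_zero]

theorem isUnit_and_norm_ringInverse_le_of_norm_smul_one_sub_le {𝕜 A : Type*} [NormedField 𝕜]
    [NormedRing A] [NormOneClass A] [NormedAlgebra 𝕜 A] [HasSummableGeomSeries A]
    {c : 𝕜} (hc : c ≠ 0) {a : A} {r : ℝ} (h : ‖c • 1 - a‖ ≤ r * ‖c‖) (hr : r < 1) :
    IsUnit a ∧ ‖a⁻¹ʳ‖ ≤ (1 - r)⁻¹ / ‖c‖ := by
  set b := c⁻¹ • a
  have hab : a = Units.mk0 c hc • b := by simp [b, Units.smul_def, smul_smul, hc]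
  have hb : ‖1 - b‖ ≤ r := by
    have : 1 - b = c⁻¹ • (c • 1 - a) := by simp [b, smul_sub, smul_smul, hc]
    rwa [this, norm_smul, norm_inv, inv_mul_le_iff₀ (norm_pos_iff.2 hc), mul_comm]
  refine ⟨hab ▸ (isUnit_smul_iff _ _).2 (isUnit_of_norm_one_sub_lt_one (hb.trans_lt hr)), ?_⟩
  rw [hab, Units.smul_def, Units.val_mk0, Ring.inverse_smul hc, norm_smul, norm_inv,
    inv_mul_eq_div]
  gcongr
  exact norm_ringInverse_le_of_norm_one_sub_le hb hr

theorem three_mul_sq_le_pi_sq_mul_mul_add_four_div_three {f : ℝ} (hf : 0 ≤ f) :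
    3 * f ^ 2 ≤ π ^ 2 * f * (f + 4) / 3 := by
  have hπ : 9 ≤ π ^ 2 := by nlinarith [pi_gt_three]
  nlinarith [mul_le_mul_of_nonneg_right hπ (mul_nonneg hf (by linarith : 0 ≤ f + 4))]

theorem isUnit_and_norm_ringInverse_sub_mul_mul_le {A : Type*} [NormedRing A] [NormOneClass A]
    [NormedAlgebra ℝ A] [HasSummableGeomSeries A] {a₁ a₂ b : A} {f : ℝ} (hf : 0 < f)
    (hb : ‖b‖ ≤ 1.008) (h₁ : ‖a₁‖ ≤ 0.08 * f)
    (h₂ : ‖(π ^ 2 * f * (f + 4) / 3) • 1 - a₂‖ ≤ 1.06 * f ^ 2) :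
    IsUnit (a₂ - a₁ * b * a₁) ∧ ‖(a₂ - a₁ * b * a₁)⁻¹ʳ‖ ≤ 1 / f ^ 2 := by
  set κ := π ^ 2 * f * (f + 4) / 3
  have hκ : 3 * f ^ 2 ≤ κ := three_mul_sq_le_pi_sq_mul_mul_add_four_div_three hf.le
  have hκ₀ : 0 < κ := by positivity
  have hS : ‖κ • 1 - (a₂ - a₁ * b * a₁)‖ ≤ 1 / 2 * ‖κ‖ := by
    calc ‖κ • 1 - (a₂ - a₁ * b * a₁)‖ = ‖(κ • 1 - a₂) + a₁ * b * a₁‖ := by congr 1; abel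
      _ ≤ ‖κ • 1 - a₂‖ + ‖a₁‖ * ‖b‖ * ‖a₁‖ := by grw [norm_add_le, norm_mul₃_le]
      _ ≤ 1.06 * f ^ 2 + 0.08 * f * 1.008 * (0.08 * f) := by gcongr
      _ ≤ 1 / 2 * ‖κ‖ := by rw [norm_of_nonneg hκ₀.le]; nlinarith
  obtain ⟨hu, hinv⟩ :=
    isUnit_and_norm_ringInverse_le_of_norm_smul_one_sub_le hκ₀.ne' hS (by norm_num)
  refine ⟨hu, hinv.trans ?_⟩
  rw [norm_of_nonneg hκ₀.le, div_le_div_iff₀ hκ₀ (by positivity)]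
  linarith

namespace Matrix

variable {n R : Type*} [Fintype n] [DecidableEq n] [CommRing R]

theorem mulVec_neg_nonsing_inv_mul_mulVec_add {A : Matrix n n R} (hA : IsUnit A)
    (B : Matrix n n R) (w : n → R) : A *ᵥ -((A⁻¹ * B) *ᵥ w) + B *ᵥ w = 0 := by
  rw [mulVec_neg, mulVec_mulVec, ← Matrix.mul_assoc,
    mul_nonsing_inv _ ((isUnit_iff_isUnit_det A).1 hA), Matrix.one_mul, neg_add_cancel]

theorem mulVec_neg_nonsing_inv_mul_mulVec_add_eq (A B C D : Matrix n n R) (w : n → R) :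
    C *ᵥ -((A⁻¹ * B) *ᵥ w) + D *ᵥ w = (D - C * A⁻¹ * B) *ᵥ w := by
  rw [mulVec_neg, mulVec_mulVec, sub_mulVec, Matrix.mul_assoc]
  abel

end Matrix

attribute [local instance] Matrix.linftyOpNormedAddCommGroup Matrix.linftyOpNormedRing
  Matrix.linftyOpNormedSpace Matrix.linftyOpNormedAlgebra

theorem rowSumNorm_eq_norm {m : ℕ} (M : Matrix (Fin m) (Fin m) ℂ) : rowSumNorm M = ‖M‖ := by
  rw [rowSumNorm, linfty_opNorm_def, Finset.sup_univ_eq_ciSup, NNReal.coe_iSup]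
  push_cast
  rfl

theorem vecSupNorm_eq_norm {m : ℕ} (v : Fin m → ℂ) : vecSupNorm v = ‖v‖ := by
  rw [vecSupNorm, Pi.norm_def, Finset.sup_univ_eq_ciSup, NNReal.coe_iSup]
  rfl

/-- well-posedness of the interpolation system defining the
dual polynomial coefficients. -/
theorem interpolation_system_bounds :
    ∃ Cκ Cα Cβ : ℝ, 0 < Cκ ∧ 0 < Cα ∧ 0 < Cβ ∧
      ∀ (f : ℕ), 1 ≤ f → ∀ (m : ℕ), 0 < m →
        ∀ D₀ D₁ D₂ : Matrix (Fin m) (Fin m) ℂ,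
          rowSumNorm (1 - D₀) ≤ 0.007 →
          rowSumNorm D₁ ≤ 0.08 * f →
          rowSumNorm ((π ^ 2 * f * (f + 4) / 3 : ℝ) • (1 : Matrix (Fin m) (Fin m) ℂ) - D₂) ≤
            1.06 * f ^ 2 →
          IsUnit D₀ ∧
          rowSumNorm D₀⁻¹ ≤ 1 / (1 - 0.007) ∧
          IsUnit (D₂ - D₁ * D₀⁻¹ * D₁) ∧
          rowSumNorm (D₂ - D₁ * D₀⁻¹ * D₁)⁻¹ ≤ Cκ / f ^ 2 ∧
          ∀ v : Fin m → ℂ, vecSupNorm v ≤ 1 →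
            D₀.mulVec (-(D₀⁻¹ * D₁).mulVec ((D₂ - D₁ * D₀⁻¹ * D₁)⁻¹.mulVec v)) +
                D₁.mulVec ((D₂ - D₁ * D₀⁻¹ * D₁)⁻¹.mulVec v) = 0 ∧
            D₁.mulVec (-(D₀⁻¹ * D₁).mulVec ((D₂ - D₁ * D₀⁻¹ * D₁)⁻¹.mulVec v)) +
                D₂.mulVec ((D₂ - D₁ * D₀⁻¹ * D₁)⁻¹.mulVec v) = v ∧
            vecSupNorm (-(D₀⁻¹ * D₁).mulVec ((D₂ - D₁ * D₀⁻¹ * D₁)⁻¹.mulVec v)) ≤ Cα / f ∧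
            vecSupNorm ((D₂ - D₁ * D₀⁻¹ * D₁)⁻¹.mulVec v) ≤ Cβ / f ^ 2 := by
  refine ⟨1, 1, 1, one_pos, one_pos, one_pos, fun f hf m hm D₀ D₁ D₂ h₀ h₁ h₂ ↦ ?_⟩
  -- `NormOneClass` for the matrix algebra: for `m = 0` its unit has norm `0`
  have : Nonempty (Fin m) := ⟨⟨0, hm⟩⟩
  replace hf : (0 : ℝ) < f := by exact_mod_cast hf
  simp only [rowSumNorm_eq_norm, vecSupNorm_eq_norm] at h₀ h₁ h₂ ⊢
  have hD₀ : IsUnit D₀ := isUnit_of_norm_one_sub_lt_one (h₀.trans_lt (by norm_num))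
  have hD₀inv : ‖D₀⁻¹‖ ≤ 1 / (1 - 0.007) := by
    rw [nonsing_inv_eq_ringInverse, one_div]
    exact norm_ringInverse_le_of_norm_one_sub_le h₀ (by norm_num)
  obtain ⟨hS, hSinv⟩ :=
    isUnit_and_norm_ringInverse_sub_mul_mul_le hf (hD₀inv.trans (by norm_num)) h₁ h₂
  set S := D₂ - D₁ * D₀⁻¹ * D₁
  rw [← nonsing_inv_eq_ringInverse] at hSinv
  refine ⟨hD₀, hD₀inv, hS, hSinv, fun v hv ↦ ?_⟩
  have hβ : ‖S⁻¹ *ᵥ v‖ ≤ 1 / f ^ 2 :=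
    (linfty_opNorm_mulVec _ _).trans <| by
      simpa using mul_le_mul hSinv hv (norm_nonneg _) (by positivity)
  refine ⟨mulVec_neg_nonsing_inv_mul_mulVec_add hD₀ _ _, ?_, ?_, hβ⟩
  · rw [mulVec_neg_nonsing_inv_mul_mulVec_add_eq, mulVec_mulVec,
      mul_nonsing_inv _ ((isUnit_iff_isUnit_det S).1 hS), one_mulVec]
  · calc ‖-((D₀⁻¹ * D₁) *ᵥ S⁻¹ *ᵥ v)‖ ≤ ‖D₀⁻¹‖ * ‖D₁‖ * ‖S⁻¹ *ᵥ v‖ := by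
          rw [norm_neg]
          exact (linfty_opNorm_mulVec _ _).trans (by gcongr; exact linfty_opNorm_mul _ _)
      _ ≤ 1 / (1 - 0.007) * (0.08 * f) * (1 / f ^ 2) := by gcongr
      _ ≤ 1 / f := by field_simp; nlinarith
end
end
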